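/- arXiv:2509.23357 — 2 statements merged into one kernel-verified Lean document; each statement's English description precedes it below -/
import Mathlib

section
/- Let μ be a Borel probability measure on ℝᵈ with compact support, p_σ = N(0,σ²I) ∗ μ for σ > 0, and ν_{x,σ} the posterior of observing x under noise model p_σ with prior μ. Then I + σ²·∇² log p_σ(x) = σ^{−2}·Cov(ν_{x,σ}), where Cov denotes the covariance matrix of the posterior. -/
set_option maxHeartbeats 1000000

open MeasureTheory Real RealInnerProductSpace

/-- For a compactly supported Borel probability measure `μ` on `ℝᵈ`,
`I + σ² ∇² log p_σ(x) = σ⁻² Cov(ν_{x,σ})`, where `ν_{x,σ}` is the posterior of observing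
`x` under the Gaussian noise model `p_σ` with prior `μ`.  The Hessian is expressed through
the Fréchet derivative of the gradient field, and both sides are applied to a direction
vector `v`. -/
theorem stmt_6 {d : ℕ} (μ : Measure (EuclideanSpace ℝ (Fin d))) [IsProbabilityMeasure μ]
    (K : Set (EuclideanSpace ℝ (Fin d))) (hK : IsCompact K) (hμK : μ Kᶜ = 0)
    (σ : ℝ) (hσ : 0 < σ)
    (pσ : EuclideanSpace ℝ (Fin d) → ℝ)
    (hp : ∀ x, pσ x =
      ∫ y, (2 * π * σ ^ 2) ^ (-(d : ℝ) / 2) * Real.exp (-‖x - y‖ ^ 2 / (2 * σ ^ 2)) ∂μ)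
    (x : EuclideanSpace ℝ (Fin d))
    (ν : Measure (EuclideanSpace ℝ (Fin d)))
    (hν : ν = μ.withDensity fun y => ENNReal.ofReal
      ((pσ x)⁻¹ * ((2 * π * σ ^ 2) ^ (-(d : ℝ) / 2) *
        Real.exp (-‖x - y‖ ^ 2 / (2 * σ ^ 2)))))
    (v : EuclideanSpace ℝ (Fin d)) :
    v + σ ^ 2 • (fderiv ℝ (fun z => gradient (fun w => Real.log (pσ w)) z) x) v =
      (σ ^ 2)⁻¹ •
        ((∫ y, ⟪y, v⟫ • y ∂ν) - ⟪∫ y, y ∂ν, v⟫ • (∫ y, y ∂ν)) := by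
  have hσ2 : (0:ℝ) < σ ^ 2 := by positivity
  set c : ℝ := (2 * π * σ ^ 2) ^ (-(d : ℝ) / 2) with hc
  have hc_pos : 0 < c := Real.rpow_pos_of_pos (by positivity) _
  set g : EuclideanSpace ℝ (Fin d) → EuclideanSpace ℝ (Fin d) → ℝ :=
    fun z y => c * Real.exp (-‖z - y‖ ^ 2 / (2 * σ ^ 2)) with hgdef
  set p : EuclideanSpace ℝ (Fin d) → ℝ := fun z => ∫ y, g z y ∂μ with hpdef
  set q : EuclideanSpace ℝ (Fin d) → EuclideanSpace ℝ (Fin d) :=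
    fun z => ∫ y, g z y • y ∂μ with hqdef
  have hpσ : ∀ z, pσ z = p z := fun z => hp z
  -- a.e. bound on the support
  obtain ⟨R, hR⟩ := hK.isBounded.exists_norm_le
  have haeR : ∀ᵐ y ∂μ, ‖y‖ ≤ R := by
    have : ∀ᵐ y ∂μ, y ∈ K := by
      rw [ae_iff]
      exact hμK
    exact this.mono fun y hy => hR y hy
  -- basic facts about g
  have hg_pos : ∀ z y, 0 < g z y := fun z y => mul_pos hc_pos (Real.exp_pos _)
  have hg_le : ∀ z y, g z y ≤ c := by
    intro z y
    have h1 : Real.exp (-‖z - y‖ ^ 2 / (2 * σ ^ 2)) ≤ 1 := by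
      rw [Real.exp_le_one_iff]
      apply div_nonpos_of_nonpos_of_nonneg
      · simp [sq_nonneg]
      · positivity
    simpa using mul_le_of_le_one_right hc_pos.le h1
  have hg_cont : ∀ z, Continuous fun y => g z y := by
    intro z
    apply continuous_const.mul
    apply Real.continuous_exp.comp
    fun_prop
  -- the fiberwise derivative
  set D : EuclideanSpace ℝ (Fin d) → EuclideanSpace ℝ (Fin d) →
      (EuclideanSpace ℝ (Fin d) →L[ℝ] ℝ) :=
    fun z y => (-(σ ^ 2)⁻¹ * g z y) • innerSL ℝ (z - y) with hDdef
  have hD_deriv : ∀ z y, HasFDerivAt (fun w => g w y) (D z y) z := by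
    intro z y
    have h1 : HasFDerivAt (fun w : EuclideanSpace ℝ (Fin d) => ‖w - y‖ ^ 2)
        (2 • (innerSL ℝ (z - y))) z := by
      simpa using ((hasFDerivAt_id z).sub_const y).norm_sq
    have h2 := h1.const_mul (-(2 * σ ^ 2)⁻¹)
    have h3 := h2.exp
    have h4 := h3.const_mul c
    have hfun : (fun w => g w y)
        = fun w => c * Real.exp (-(2 * σ ^ 2)⁻¹ * ‖w - y‖ ^ 2) := by
      funext w
      simp only [hgdef]
      congr 1
      ring
    have hclm : D z y = c • (Real.exp (-(2 * σ ^ 2)⁻¹ * ‖z - y‖ ^ 2) •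
        ((-(2 * σ ^ 2)⁻¹) • (2 • innerSL ℝ (z - y)))) := by
      ext h
      simp only [hDdef, hgdef, ContinuousLinearMap.smul_apply, innerSL_apply_apply,
        smul_eq_mul, nsmul_eq_mul, Nat.cast_ofNat]
      have he : Real.exp (-‖z - y‖ ^ 2 / (2 * σ ^ 2))
          = Real.exp (-(2 * σ ^ 2)⁻¹ * ‖z - y‖ ^ 2) := by
        congr 1
        ring
      rw [he]
      ring
    rw [hfun, hclm]
    exact h4
  have hD_cont : ∀ z, Continuous fun y => D z y := by
    intro z
    apply Continuous.smul (f := fun y => -(σ ^ 2)⁻¹ * g z y) (g := fun y => innerSL ℝ (z - y))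
    · exact continuous_const.mul (hg_cont z)
    · exact (innerSL ℝ).continuous.comp (continuous_const.sub continuous_id)
  have hDsmul_cont : ∀ z, Continuous fun y => (D z y).smulRight y := by
    intro z
    have h : Continuous fun p : (EuclideanSpace ℝ (Fin d) →L[ℝ] ℝ) ×
        EuclideanSpace ℝ (Fin d) => p.1.smulRight p.2 :=
      isBoundedBilinearMap_smulRight.continuous
    exact h.comp ((hD_cont z).prodMk continuous_id)
  have hD_norm : ∀ z y, ‖D z y‖ ≤ (σ ^ 2)⁻¹ * c * ‖z - y‖ := by
    intro z y
    have hb : (0:ℝ) ≤ (σ ^ 2)⁻¹ * c * ‖z - y‖ := by positivity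
    refine ContinuousLinearMap.opNorm_le_bound _ hb fun u => ?_
    simp only [hDdef, ContinuousLinearMap.smul_apply, innerSL_apply_apply, smul_eq_mul,
      Real.norm_eq_abs]
    rw [abs_mul, abs_mul, abs_neg, abs_of_pos (by positivity : (0:ℝ) < (σ ^ 2)⁻¹),
      abs_of_pos (hg_pos z y)]
    have h1 : |⟪z - y, u⟫| ≤ ‖z - y‖ * ‖u‖ := abs_real_inner_le_norm _ _
    have h2 : (σ ^ 2)⁻¹ * g z y ≤ (σ ^ 2)⁻¹ * c := by
      gcongr
      exact hg_le z y
    refine le_trans (mul_le_mul h2 h1 (abs_nonneg _) (by positivity)) ?_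
    exact le_of_eq (by ring)
  -- integrability facts
  have int_g : ∀ z, Integrable (fun y => g z y) μ := by
    intro z
    refine (integrable_const c).mono' (hg_cont z).aestronglyMeasurable ?_
    exact Filter.Eventually.of_forall fun y => by
      rw [Real.norm_eq_abs, abs_of_pos (hg_pos z y)]; exact hg_le z y
  have int_gy : ∀ z, Integrable (fun y => g z y • y) μ := by
    intro z
    refine (integrable_const (c * R)).mono'
      ((hg_cont z).smul continuous_id).aestronglyMeasurable ?_
    refine haeR.mono fun y hy => ?_
    rw [norm_smul, Real.norm_eq_abs, abs_of_pos (hg_pos z y)]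
    exact mul_le_mul (hg_le z y) hy (norm_nonneg _) hc_pos.le
  have int_gi : ∀ z (h : EuclideanSpace ℝ (Fin d)),
      Integrable (fun y => g z y * ⟪y, h⟫) μ := by
    intro z h
    refine (integrable_const (c * (R * ‖h‖))).mono'
      ((hg_cont z).mul ((continuous_id.inner continuous_const))).aestronglyMeasurable ?_
    refine haeR.mono fun y hy => ?_
    rw [Real.norm_eq_abs, abs_mul, abs_of_pos (hg_pos z y)]
    have h1 : |⟪y, h⟫| ≤ ‖y‖ * ‖h‖ := abs_real_inner_le_norm y h
    have h2 : ‖y‖ * ‖h‖ ≤ R * ‖h‖ := by gcongr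
    exact mul_le_mul (hg_le z y) (h1.trans h2) (abs_nonneg _) hc_pos.le
  have int_D : ∀ z, Integrable (fun y => D z y) μ := by
    intro z
    refine (integrable_const ((σ ^ 2)⁻¹ * c * (‖z‖ + R))).mono'
      (hD_cont z).aestronglyMeasurable ?_
    refine haeR.mono fun y hy => ?_
    refine (hD_norm z y).trans ?_
    have : ‖z - y‖ ≤ ‖z‖ + R := (norm_sub_le z y).trans (by gcongr)
    gcongr
  have int_Dy : ∀ z, Integrable (fun y => (D z y).smulRight y) μ := by
    intro z
    refine (integrable_const ((σ ^ 2)⁻¹ * c * (‖z‖ + R) * R)).mono' ?_ ?_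
    · exact (hDsmul_cont z).aestronglyMeasurable
    · refine haeR.mono fun y hy => ?_
      rw [ContinuousLinearMap.norm_smulRight_apply]
      have h1 : ‖D z y‖ ≤ (σ ^ 2)⁻¹ * c * (‖z‖ + R) := by
        refine (hD_norm z y).trans ?_
        have : ‖z - y‖ ≤ ‖z‖ + R := (norm_sub_le z y).trans (by gcongr)
        gcongr
      exact mul_le_mul h1 hy (norm_nonneg _) (le_trans (norm_nonneg _) h1)
  have int_T : Integrable (fun y => (g x y * ⟪y, v⟫) • y) μ := by
    refine (integrable_const (c * (R * ‖v‖) * R)).mono' ?_ ?_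
    · exact (((hg_cont x).mul (continuous_id.inner continuous_const)).smul
        continuous_id).aestronglyMeasurable
    · refine haeR.mono fun y hy => ?_
      rw [norm_smul, Real.norm_eq_abs, abs_mul, abs_of_pos (hg_pos x y)]
      have h1 : |⟪y, v⟫| ≤ R * ‖v‖ :=
        (abs_real_inner_le_norm y v).trans (by gcongr)
      have h2 : g x y * |⟪y, v⟫| ≤ c * (R * ‖v‖) :=
        mul_le_mul (hg_le x y) h1 (abs_nonneg _) hc_pos.le
      have h3 : (0:ℝ) ≤ c * (R * ‖v‖) := le_trans (by positivity) h2
      exact mul_le_mul h2 hy (norm_nonneg _) h3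
  -- positivity of p
  have hp_pos : ∀ z, 0 < p z := by
    intro z
    rw [hpdef]
    simp only []
    rw [integral_pos_iff_support_of_nonneg (fun y => (hg_pos z y).le) (int_g z)]
    have : Function.support (fun y => g z y) = Set.univ := by
      ext y; simp [Function.mem_support, (hg_pos z y).ne']
    simp [this]
  -- inner products with q
  have hSz : ∀ z h, ⟪q z, h⟫ = ∫ y, g z y * ⟪y, h⟫ ∂μ := by
    intro z h
    have h0 := (innerSL ℝ h).integral_comp_comm (int_gy z)
    simp only [innerSL_apply_apply] at h0
    rw [real_inner_comm]
    simp only [hqdef]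
    rw [← h0]
    refine integral_congr_ae (Filter.Eventually.of_forall fun y => ?_)
    show ⟪h, g z y • y⟫ = g z y * ⟪y, h⟫
    rw [real_inner_smul_right, real_inner_comm]
  -- differentiation under the integral sign
  have hP : ∀ z, HasFDerivAt p (∫ y, D z y ∂μ) z := by
    intro z
    refine hasFDerivAt_integral_of_dominated_of_fderiv_le (s := Metric.ball z 1) (Metric.ball_mem_nhds z one_pos)
      (Filter.Eventually.of_forall fun w => (hg_cont w).aestronglyMeasurable)
      (int_g z) (hD_cont z).aestronglyMeasurable
      (bound := fun _ => (σ ^ 2)⁻¹ * c * (‖z‖ + 1 + R)) ?_ (integrable_const _) ?_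
    · refine haeR.mono fun y hy w hw => ?_
      refine (hD_norm w y).trans ?_
      have hwz : ‖w‖ ≤ ‖z‖ + 1 := by
        have := mem_ball_iff_norm.mp hw
        have h2 : ‖w‖ - ‖z‖ ≤ ‖w - z‖ := norm_sub_norm_le w z
        linarith
      have : ‖w - y‖ ≤ ‖z‖ + 1 + R := by
        refine (norm_sub_le w y).trans ?_
        have := hy
        linarith
      show (σ ^ 2)⁻¹ * c * ‖w - y‖ ≤ (σ ^ 2)⁻¹ * c * (‖z‖ + 1 + R)
      gcongr
    · exact Filter.Eventually.of_forall fun y w _ => hD_deriv w y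
  have hQ : ∀ z, HasFDerivAt q (∫ y, (D z y).smulRight y ∂μ) z := by
    intro z
    refine hasFDerivAt_integral_of_dominated_of_fderiv_le (𝕜 := ℝ) (s := Metric.ball z 1)
      (F' := fun w y => (D w y).smulRight y) (Metric.ball_mem_nhds z one_pos)
      (Filter.Eventually.of_forall fun w =>
        (((hg_cont w).smul continuous_id :
          Continuous fun y => g w y • y)).aestronglyMeasurable)
      (int_gy z)
      (hDsmul_cont z).aestronglyMeasurable
      (bound := fun _ => (σ ^ 2)⁻¹ * c * (‖z‖ + 1 + R) * R) ?_ (integrable_const _) ?_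
    · refine haeR.mono fun y hy w hw => ?_
      show ‖(D w y).smulRight y‖ ≤ (σ ^ 2)⁻¹ * c * (‖z‖ + 1 + R) * R
      rw [ContinuousLinearMap.norm_smulRight_apply]
      have hwz : ‖w‖ ≤ ‖z‖ + 1 := by
        have := mem_ball_iff_norm.mp hw
        have h2 : ‖w‖ - ‖z‖ ≤ ‖w - z‖ := norm_sub_norm_le w z
        linarith
      have h1 : ‖D w y‖ ≤ (σ ^ 2)⁻¹ * c * (‖z‖ + 1 + R) := by
        refine (hD_norm w y).trans ?_
        have : ‖w - y‖ ≤ ‖z‖ + 1 + R := by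
          refine (norm_sub_le w y).trans ?_
          linarith
        gcongr
      exact mul_le_mul h1 hy (norm_nonneg _) (le_trans (norm_nonneg _) h1)
    · exact Filter.Eventually.of_forall fun y w _ => (hD_deriv w y).smul_const y
  -- value of the derivative of p
  have hPDapp : ∀ z h, (∫ y, D z y ∂μ) h
      = (σ ^ 2)⁻¹ * (⟪q z, h⟫ - ⟪z, h⟫ * p z) := by
    intro z h
    rw [ContinuousLinearMap.integral_apply (int_D z)]
    have e : ∀ y, D z y h
        = (σ ^ 2)⁻¹ * (g z y * ⟪y, h⟫) - ((σ ^ 2)⁻¹ * ⟪z, h⟫) * g z y := by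
      intro y
      simp only [hDdef, ContinuousLinearMap.smul_apply, innerSL_apply_apply, smul_eq_mul]
      rw [inner_sub_left]
      ring
    simp only [e]
    rw [integral_sub ((int_gi z h).const_mul _) ((int_g z).const_mul _),
      integral_const_mul, integral_const_mul, hSz z h]
    have hpz : (∫ y, g z y ∂μ) = p z := rfl
    rw [hpz]
    ring
  -- the gradient of log p
  have hgrad : ∀ z, HasGradientAt (fun w => Real.log (pσ w))
      ((σ ^ 2)⁻¹ • ((p z)⁻¹ • q z - z)) z := by
    intro z
    have hfun : (fun w => Real.log (pσ w)) = fun w => Real.log (p w) :=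
      funext fun w => by rw [hpσ w]
    rw [hfun, hasGradientAt_iff_hasFDerivAt]
    have hlog : HasFDerivAt (fun w => Real.log (p w))
        ((p z)⁻¹ • ∫ y, D z y ∂μ) z := (hP z).log (hp_pos z).ne'
    refine hlog.congr_fderiv ?_
    refine ContinuousLinearMap.ext fun h => ?_
    symm
    rw [InnerProductSpace.toDual_apply_apply]
    rw [ContinuousLinearMap.smul_apply, hPDapp z h]
    rw [real_inner_smul_left, inner_sub_left, real_inner_smul_left]
    have hpne := (hp_pos z).ne'
    have hσne : σ ≠ 0 := hσ.ne'
    field_simp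
    ring_nf
    field_simp
  have hgradfun : (fun z => gradient (fun w => Real.log (pσ w)) z)
      = fun z => (σ ^ 2)⁻¹ • ((p z)⁻¹ • q z - z) :=
    funext fun z => (hgrad z).gradient
  -- the Hessian at x
  set PD := ∫ y, D x y ∂μ with hPDdef
  set QD := ∫ y, (D x y).smulRight y ∂μ with hQDdef
  have h1 : HasFDerivAt (fun z => (p z)⁻¹) ((-(p x ^ 2)⁻¹) • PD) x :=
    (hasDerivAt_inv (hp_pos x).ne').comp_hasFDerivAt x (hP x)
  have h2 : HasFDerivAt (fun z => (p z)⁻¹ • q z)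
      ((p x)⁻¹ • QD + ((-(p x ^ 2)⁻¹) • PD).smulRight (q x)) x := h1.smul (hQ x)
  have h3 := (h2.sub (hasFDerivAt_id x)).const_smul ((σ ^ 2)⁻¹)
  have hfd : fderiv ℝ (fun z => gradient (fun w => Real.log (pσ w)) z) x
      = (σ ^ 2)⁻¹ • ((p x)⁻¹ • QD + ((-(p x ^ 2)⁻¹) • PD).smulRight (q x)
          - ContinuousLinearMap.id ℝ (EuclideanSpace ℝ (Fin d))) := by
    rw [hgradfun]
    exact h3.fderiv
  -- values of PD and QD at v
  set S := ∫ y, g x y * ⟪y, v⟫ ∂μ with hSdef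
  set T := ∫ y, (g x y * ⟪y, v⟫) • y ∂μ with hTdef
  have hPDv : PD v = (σ ^ 2)⁻¹ * (S - ⟪x, v⟫ * p x) := by
    rw [hPDdef, hPDapp x v, hSz x v]
  have hQDv : QD v = (σ ^ 2)⁻¹ • T - ((σ ^ 2)⁻¹ * ⟪x, v⟫) • q x := by
    rw [hQDdef, ContinuousLinearMap.integral_apply (int_Dy x)]
    have e : ∀ y, ((D x y).smulRight y) v
        = (σ ^ 2)⁻¹ • ((g x y * ⟪y, v⟫) • y) - ((σ ^ 2)⁻¹ * ⟪x, v⟫) • (g x y • y) := by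
      intro y
      rw [ContinuousLinearMap.smulRight_apply]
      simp only [hDdef, ContinuousLinearMap.smul_apply, innerSL_apply_apply, smul_eq_mul]
      rw [inner_sub_left]
      module
    simp only [e]
    have H1 : Integrable (fun y => (σ ^ 2)⁻¹ • ((g x y * ⟪y, v⟫) • y)) μ := by
      have := int_T.smul ((σ ^ 2)⁻¹ : ℝ)
      simpa [Pi.smul_def] using this
    have H2 : Integrable (fun y => ((σ ^ 2)⁻¹ * ⟪x, v⟫) • (g x y • y)) μ := by
      have := (int_gy x).smul ((σ ^ 2)⁻¹ * ⟪x, v⟫)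
      simpa [Pi.smul_def] using this
    rw [integral_sub H1 H2, integral_smul, integral_smul]
  -- the posterior integrals
  have hν_int : ∀ f : EuclideanSpace ℝ (Fin d) → EuclideanSpace ℝ (Fin d),
      ∫ y, f y ∂ν = ∫ y, ((p x)⁻¹ * g x y) • f y ∂μ := by
    intro f
    rw [hν, hpσ x]
    have hmeas : Measurable fun y => Real.toNNReal ((p x)⁻¹ * g x y) :=
      (measurable_const.mul (hg_cont x).measurable).real_toNNReal
    have h2 : (fun y => ENNReal.ofReal ((p x)⁻¹ * g x y))
        = fun y => ((Real.toNNReal ((p x)⁻¹ * g x y) : NNReal) : ENNReal) := rfl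
    rw [h2, integral_withDensity_eq_integral_smul hmeas]
    refine integral_congr_ae (Filter.Eventually.of_forall fun y => ?_)
    show (Real.toNNReal ((p x)⁻¹ * g x y)) • f y = ((p x)⁻¹ * g x y) • f y
    rw [NNReal.smul_def, Real.coe_toNNReal _
      (mul_nonneg (inv_nonneg.mpr (hp_pos x).le) (hg_pos x y).le)]
  have hM : ∫ y, y ∂ν = (p x)⁻¹ • q x := by
    rw [hν_int (fun y => y)]
    simp only [mul_smul]
    rw [integral_smul]
  have hA : ∫ y, ⟪y, v⟫ • y ∂ν = (p x)⁻¹ • T := by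
    rw [hν_int (fun y => ⟪y, v⟫ • y), hTdef]
    rw [← integral_smul]
    congr 1
    funext y
    rw [smul_smul, smul_smul, mul_assoc]
  -- final computation
  rw [hfd, hM, hA]
  have happ : ((σ ^ 2)⁻¹ • ((p x)⁻¹ • QD + ((-(p x ^ 2)⁻¹) • PD).smulRight (q x)
      - ContinuousLinearMap.id ℝ (EuclideanSpace ℝ (Fin d)))) v
      = (σ ^ 2)⁻¹ • ((p x)⁻¹ • QD v + ((-(p x ^ 2)⁻¹) * PD v) • q x - v) := by
    simp [ContinuousLinearMap.smul_apply, ContinuousLinearMap.add_apply,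
      ContinuousLinearMap.sub_apply, ContinuousLinearMap.smulRight_apply, smul_smul]
  rw [happ, hQDv, hPDv]
  rw [real_inner_smul_left, hSz x v, ← hSdef]
  have hps := (hp_pos x).ne'
  have hσs : (σ ^ 2 : ℝ) ≠ 0 := hσ2.ne'
  rw [smul_smul, mul_inv_cancel₀ hσs, one_smul]
  match_scalars
  all_goals field_simp
  all_goals ring
end

section
/- Let y, p ∈ ℝᵈ with ‖y − p‖ = τ' > 0, let x = p + t(y − p) for some t ∈ (0,1), let η > 0, and let q ∈ ℝᵈ satisfy ‖y − q‖ ≥ τ' and ‖q − p‖ ≥ η. Then ‖x − q‖² − ‖x − p‖² ≥ (1 − t)·‖p − q‖² ≥ (1 − t)·η². -/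
/-- Key geometric inequality behind the tube-distance lemma: if `‖y − p‖ = τ' > 0`,
`x = p + t(y − p)` with `t ∈ (0,1)`, and `q` satisfies `‖y − q‖ ≥ τ'` and `‖q − p‖ ≥ η`,
then `‖x − q‖² − ‖x − p‖² ≥ (1 − t)‖p − q‖² ≥ (1 − t)η²`. -/
theorem stmt_8 {d : ℕ} (y p q : EuclideanSpace ℝ (Fin d)) (τ' t η : ℝ)
    (hτ' : 0 < τ') (hyp : ‖y - p‖ = τ') (ht0 : 0 < t) (ht1 : t < 1) (hη : 0 < η)
    (x : EuclideanSpace ℝ (Fin d)) (hx : x = p + t • (y - p))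
    (hq1 : τ' ≤ ‖y - q‖) (hq2 : η ≤ ‖q - p‖) :
    (1 - t) * η ^ 2 ≤ (1 - t) * ‖p - q‖ ^ 2 ∧
      (1 - t) * ‖p - q‖ ^ 2 ≤ ‖x - q‖ ^ 2 - ‖x - p‖ ^ 2 := by
  set a := y - p with ha
  set b := q - p with hb
  have hpq : ‖p - q‖ = ‖b‖ := by rw [hb, norm_sub_rev]
  have hyq : y - q = a - b := by rw [ha, hb]; abel
  have hxq : x - q = t • a - b := by rw [hx, ha, hb]; abel
  have hxp : x - p = t • a := by rw [hx]; abel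
  have h1 : ‖a‖ ^ 2 ≤ ‖a - b‖ ^ 2 := by
    apply pow_le_pow_left₀ (norm_nonneg _)
    rw [← hyq, hyp]; exact hq1
  have e1 : ‖a - b‖ ^ 2 = ‖a‖ ^ 2 - 2 * inner ℝ a b + ‖b‖ ^ 2 := by
    rw [@norm_sub_sq_real]
  have hinner : 2 * (inner ℝ a b : ℝ) ≤ ‖b‖ ^ 2 := by linarith [h1, e1.le, e1.ge]
  have e2 : ‖t • a - b‖ ^ 2 = t ^ 2 * ‖a‖ ^ 2 - 2 * (t * inner ℝ a b) + ‖b‖ ^ 2 := by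
    rw [@norm_sub_sq_real, real_inner_smul_left, norm_smul, Real.norm_eq_abs,
      mul_pow, sq_abs]
  have e3 : ‖t • a‖ ^ 2 = t ^ 2 * ‖a‖ ^ 2 := by
    rw [norm_smul, Real.norm_eq_abs, mul_pow, sq_abs]
  constructor
  · apply mul_le_mul_of_nonneg_left _ (by linarith)
    exact pow_le_pow_left₀ hη.le (hq2.trans_eq (norm_sub_rev q p)) 2
  · rw [hxq, hxp, e2, e3, hpq]
    nlinarith [hinner]
end
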